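/- Let A = (α_0,...,α_{n-1}) with α_i ∈ (0,π). If there exists a closed polygon P ⊂ R³ realizing A (turning angle at v_i equals α_i), then there exists a spherical polygon P' = (u_0,...,u_{n-1}) in S² whose i-th side has spherical length α_i for each i, and moreover 0 ∈ relint(conv(P')). -/

import Mathlib

open Real
open scoped RealInnerProductSpace

/-- The spherical (geodesic) distance between unit vectors. -/
noncomputable def sdist (u v : EuclideanSpace ℝ (Fin 3)) : ℝ :=
  Real.arccos ⟪u, v⟫

/-!
The unit edge directions `uᵢ = (vᵢ₊₁ - vᵢ) / ‖vᵢ₊₁ - vᵢ‖` form the spherical polygon: consecutive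
directions are at spherical distance equal to the turning angle. Since the polygon closes,
`∑ ‖vᵢ₊₁ - vᵢ‖ • uᵢ = 0`, so `0` is a convex combination of the `uᵢ` with strictly positive
weights, and such a point lies in the relative interior of their convex hull.
-/

open Set InnerProductGeometry

section ConvexHull

variable {E : Type*} [NormedAddCommGroup E] [NormedSpace ℝ E] [FiniteDimensional ℝ E]
  {ι : Type*} [Fintype ι] [Nonempty ι] {u : ι → E} {w : ι → ℝ}

/-- The coefficient vectors that are positive with total weight `< 1` form an open set, which
the open map `c ↦ ∑ cᵢ • uᵢ` carries into the hull: the hull contains `0`, hence `t • x` for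
each of its points `x` and `t ∈ [0, 1]`. -/
theorem zero_mem_interior_convexHull_of_sum_smul_eq_zero (hw : ∀ i, 0 < w i)
    (h : ∑ i, w i • u i = 0) (hspan : Submodule.span ℝ (range u) = ⊤) :
    (0 : E) ∈ interior (convexHull ℝ (range u)) := by
  set f := Fintype.linearCombination ℝ u
  have hf : IsOpenMap f := f.isOpenMap_of_finiteDimensional <| LinearMap.range_eq_top.1 <| by
    rw [Fintype.range_linearCombination, hspan]
  have hW : 0 < ∑ i, w i := Finset.sum_pos (fun i _ => hw i) Finset.univ_nonempty
  have hzero : (0 : E) ∈ convexHull ℝ (range u) := by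
    have : Finset.univ.centerMass w u ∈ convexHull ℝ (range u) :=
      Finset.univ.centerMass_mem_convexHull (fun i _ => (hw i).le) hW fun i _ => mem_range_self i
    rwa [Finset.centerMass, h, smul_zero] at this
  set U : Set (ι → ℝ) := {c | ∀ i, 0 < c i} ∩ {c | ∑ i, c i < 1}
  have hU : IsOpen U := by
    refine IsOpen.inter ?_ (isOpen_lt (by fun_prop) continuous_const)
    simp only [ofPred_forall]
    exact isOpen_iInter_of_finite fun i => isOpen_lt continuous_const (continuous_apply i)
  have hfU : f '' U ⊆ convexHull ℝ (range u) := by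
    rintro _ ⟨c, ⟨hc, hc1⟩, rfl⟩
    have hC : 0 < ∑ i, c i := Finset.sum_pos (fun i _ => hc i) Finset.univ_nonempty
    have hfc : f c = (∑ i, c i) • Finset.univ.centerMass c u := by
      rw [Finset.centerMass, smul_smul, mul_inv_cancel₀ hC.ne', one_smul]
      rfl
    rw [hfc]
    exact (convex_convexHull ℝ _).smul_mem_of_zero_mem hzero
      (Finset.univ.centerMass_mem_convexHull (fun i _ => (hc i).le) hC
        fun i _ => mem_range_self i)
      ⟨hC.le, hc1.le⟩
  have h0U : (0 : E) ∈ f '' U := by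
    refine ⟨(2 * ∑ i, w i)⁻¹ • w, ⟨fun i => by simp [hw i, hW], ?_⟩, ?_⟩
    · show ∑ i, (2 * ∑ i, w i)⁻¹ * w i < 1
      rw [← Finset.mul_sum]
      field_simp
      linarith
    · rw [map_smul, Fintype.linearCombination_apply, h, smul_zero]
  exact mem_interior.2 ⟨f '' U, hfU, hf U hU, h0U⟩

/-- Inside the span of the points the hull is full-dimensional, and the inclusion of the span
is an affine isometry, which preserves intrinsic interiors. -/
theorem zero_mem_intrinsicInterior_convexHull_of_sum_smul_eq_zero (hw : ∀ i, 0 < w i)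
    (h : ∑ i, w i • u i = 0) : (0 : E) ∈ intrinsicInterior ℝ (convexHull ℝ (range u)) := by
  set V := Submodule.span ℝ (range u)
  let u' : ι → V := fun i => ⟨u i, Submodule.subset_span (mem_range_self i)⟩
  have hrange : V.subtype '' range u' = range u := by
    rw [← range_comp]
    rfl
  have hspan : Submodule.span ℝ (range u') = ⊤ :=
    Submodule.map_injective_of_injective V.injective_subtype <| by
      rw [Submodule.map_span, Submodule.map_subtype_top, hrange]
  have h' : ∑ i, w i • u' i = 0 := Subtype.coe_injective <| by simpa using h
  have hint := interior_subset_intrinsicInterior (𝕜 := ℝ)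
    (zero_mem_interior_convexHull_of_sum_smul_eq_zero hw h' hspan)
  rw [← hrange, ← V.subtype.image_convexHull,
    show ⇑V.subtype = V.subtypeₗᵢ.toAffineIsometry from rfl,
    AffineIsometry.intrinsicInterior_image]
  exact ⟨0, hint, rfl⟩

theorem centerMass_mem_intrinsicInterior_convexHull (hw : ∀ i, 0 < w i) :
    Finset.univ.centerMass w u ∈ intrinsicInterior ℝ (convexHull ℝ (range u)) := by
  set x := Finset.univ.centerMass w u
  have hW : ∑ i, w i ≠ 0 := (Finset.sum_pos (fun i _ => hw i) Finset.univ_nonempty).ne'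
  have h : ∑ i, w i • (u i - x) = 0 := by
    simp only [smul_sub, Finset.sum_sub_distrib, ← Finset.sum_smul, sub_eq_zero]
    exact (smul_inv_smul₀ hW _).symm
  have h0 := zero_mem_intrinsicInterior_convexHull_of_sum_smul_eq_zero hw h
  let τ := AffineEquiv.constVAdd ℝ E x
  have hrange : τ '' range (fun i => u i - x) = range u := by
    rw [← range_comp]
    congr 1
    funext i
    simp [τ]
  have hhull := τ.toAffineMap.image_convexHull (range fun i => u i - x)
  rw [AffineEquiv.coe_toAffineMap, hrange] at hhull
  rw [← hhull, AffineEquiv.intrinsicInterior_image]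
  exact ⟨0, h0, by simp [τ]⟩

end ConvexHull

theorem angle_normalize_normalize {V : Type*} [NormedAddCommGroup V] [InnerProductSpace ℝ V]
    (x y : V) :
    angle (NormedSpace.normalize x) (NormedSpace.normalize y) = angle x y := by
  rcases eq_or_ne x 0 with rfl | hx
  · simp
  rcases eq_or_ne y 0 with rfl | hy
  · simp
  rw [NormedSpace.normalize, NormedSpace.normalize,
    angle_smul_left_of_pos _ _ (inv_pos.2 (norm_pos_iff.2 hx)),
    angle_smul_right_of_pos _ _ (inv_pos.2 (norm_pos_iff.2 hy))]

theorem sdist_eq_angle {u v : EuclideanSpace ℝ (Fin 3)} (hu : ‖u‖ = 1) (hv : ‖v‖ = 1) :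
    sdist u v = angle u v := by
  simp [sdist, angle, hu, hv]

theorem spherical_polygon_of_polygon_general {n : ℕ} [NeZero n]
    (v : Fin n → EuclideanSpace ℝ (Fin 3))
    (hnd : ∀ i : Fin n, v (i + 1) ≠ v i)
    (α : Fin n → ℝ)
    (hreal : ∀ i : Fin n,
      InnerProductGeometry.angle (v i - v (i - 1)) (v (i + 1) - v i) = α i) :
    ∃ u : Fin n → EuclideanSpace ℝ (Fin 3),
      (∀ i : Fin n, ‖u i‖ = 1) ∧
      (∀ i : Fin n, sdist (u (i - 1)) (u i) = α i) ∧
      (0 : EuclideanSpace ℝ (Fin 3)) ∈ intrinsicInterior ℝ (convexHull ℝ (Set.range u)) := by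
  set e : Fin n → EuclideanSpace ℝ (Fin 3) := fun i => v (i + 1) - v i
  have he : ∀ i, e i ≠ 0 := fun i => sub_ne_zero.2 (hnd i)
  have hclosed : ∑ i, e i = 0 := by
    rw [Finset.sum_sub_distrib, sub_eq_zero]
    exact Equiv.sum_comp (Equiv.addRight (1 : Fin n)) v
  refine ⟨fun i => NormedSpace.normalize (e i), fun i => NormedSpace.norm_normalize (he i),
    fun i => ?_, ?_⟩
  · rw [sdist_eq_angle (NormedSpace.norm_normalize (he _)) (NormedSpace.norm_normalize (he i)),
      angle_normalize_normalize, ← hreal i]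
    simp [e]
  · have hcm : Finset.univ.centerMass (‖e ·‖) (fun i => NormedSpace.normalize (e i)) = 0 := by
      simp [Finset.centerMass, NormedSpace.norm_smul_normalize, hclosed]
    rw [← hcm]
    exact centerMass_mem_intrinsicInterior_convexHull fun i => norm_pos_iff.2 (he i)

/-- If a closed polygon in `ℝ³` realizes the angle sequence `α ∈ (0,π)^n` (the turning
angle at vertex `i` is `α i`), then there is a spherical polygon `u 0, …, u (n-1)` on the
unit sphere whose `i`-th side has spherical length `α i`, and moreover the origin lies in
the relative interior of its convex hull. -/
theorem spherical_polygon_of_polygon {n : ℕ} [NeZero n] (hn : 3 ≤ n)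
    (v : Fin n → EuclideanSpace ℝ (Fin 3))
    (hnd : ∀ i : Fin n, v (i + 1) ≠ v i)
    (α : Fin n → ℝ) (hα : ∀ i : Fin n, α i ∈ Set.Ioo 0 π)
    (hreal : ∀ i : Fin n,
      InnerProductGeometry.angle (v i - v (i - 1)) (v (i + 1) - v i) = α i) :
    ∃ u : Fin n → EuclideanSpace ℝ (Fin 3),
      (∀ i : Fin n, ‖u i‖ = 1) ∧
      (∀ i : Fin n, sdist (u (i - 1)) (u i) = α i) ∧
      (0 : EuclideanSpace ℝ (Fin 3)) ∈ intrinsicInterior ℝ (convexHull ℝ (Set.range u)) :=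
  spherical_polygon_of_polygon_general v hnd α hreal
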